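/- Let {X_n} satisfy AIM(x_n) with separation sequence q_n and mixing coefficients α_n, suppose n·F̄(x_n) → τ > 0 as n → ∞, and let (p_n) be positive integers with p_n = o(n), n·α_n = o(p_n) and q_n = o(p_n). Then liminf_{n→∞} [ P(M_n ≤ x_n) − exp{−∑_{j=1}^{n} P(X_j > x_n, M_{j,j+p_n} ≤ x_n)} ] ≥ 0, i.e. P(M_n ≤ x_n) ≥ exp{−∑_{j=1}^{n} P(X_j > x_n, M_{j,j+p_n} ≤ x_n)} + o(1). -/

import Mathlib

/-!
Cut `[1, n]` into about `n / r` blocks of length `r`, where `q n`, `p n` and `n α n` are `o(r)` and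
`r = o(n)`, and drop the last `q n` indices of each block. AIM peels the shortened blocks off one at
a time, each at a cost of `α n` plus `q n F̄` for the dropped gap. Inside a block `B`, splitting
according to the last exceedance gives `P(M(B) ≤ x) ≥ 1 - s` with
`s = ∑_{j ∈ B} P(X_j > x, M_{j,j+p} ≤ x) + p F̄`, and `1 - s ≥ e^{-s} - s²`. The accumulated error
`(n / r)(α n + (q n + p n) F̄) + 2 r F̄ (2 n F̄ + 1)` tends to `0` because `n F̄` converges.
-/

open MeasureTheory Filter Finset Asymptotics

/-- Probability of an event as a real number. -/
noncomputable def pr {Ω : Type*} [MeasurableSpace Ω] (P : Measure Ω) (A : Set Ω) : ℝ :=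
  (P A).toReal

/-- The event that `X i ≤ x` for every index `i` in the set `S`;
this is the event `{M(S) ≤ x}` where `M(S) = max {X i : i ∈ S}`. -/
def allLe {Ω : Type*} (X : ℕ → Ω → ℝ) (S : Set ℕ) (x : ℝ) : Set Ω :=
  {ω | ∀ i ∈ S, X i ω ≤ x}

/-- `α` is a sequence of AIM mixing coefficients for `X` relative to thresholds `xs`
with separation sequence `q`: for any two intervals `I₁ = [a,b]`, `I₂ = [b+qₙ+1, c]`
contained in `{1,…,n}`, separated by `qₙ`, each of cardinality at least `qₙ`,
the maximum-based discrepancy is bounded by `α n`. -/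
def AIMBound {Ω : Type*} [MeasurableSpace Ω] (P : Measure Ω) (X : ℕ → Ω → ℝ)
    (xs : ℕ → ℝ) (q : ℕ → ℕ) (α : ℕ → ℝ) : Prop :=
  ∀ n a b c : ℕ, 1 ≤ a → a ≤ b → b + q n + 1 ≤ c → c ≤ n →
    q n ≤ b + 1 - a → q n ≤ c - (b + q n) →
    |pr P (allLe X (Set.Icc a b ∪ Set.Icc (b + q n + 1) c) (xs n)) -
      pr P (allLe X (Set.Icc a b) (xs n)) *
        pr P (allLe X (Set.Icc (b + q n + 1) c) (xs n))| ≤ α n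

section Probability

variable {Ω : Type*} [MeasurableSpace Ω] (P : Measure Ω)

lemma pr_nonneg (A : Set Ω) : 0 ≤ pr P A := measureReal_nonneg

lemma pr_le_one [IsProbabilityMeasure P] (A : Set Ω) : pr P A ≤ 1 := measureReal_le_one

lemma pr_mono [IsFiniteMeasure P] {A B : Set Ω} (h : A ⊆ B) : pr P A ≤ pr P B :=
  measureReal_mono h

lemma pr_biUnion_le {ι : Type*} (s : Finset ι) (A : ι → Set Ω) :
    pr P (⋃ i ∈ s, A i) ≤ ∑ i ∈ s, pr P (A i) :=
  measureReal_biUnion_finset_le s A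

lemma one_sub_pr_compl_le [IsProbabilityMeasure P] (A : Set Ω) : 1 - pr P Aᶜ ≤ pr P A := by
  have h : P.real (A ∪ Aᶜ) ≤ P.real A + P.real Aᶜ := measureReal_union_le A Aᶜ
  rw [Set.union_compl_self, probReal_univ] at h
  exact sub_le_iff_le_add.2 h

lemma pr_sub_pr_compl_le_pr_inter [IsFiniteMeasure P] (A B : Set Ω) :
    pr P A - pr P Bᶜ ≤ pr P (A ∩ B) := by
  have hA : A ⊆ (A ∩ B) ∪ Bᶜ := fun ω hω => by by_cases hB : ω ∈ B <;> simp [hω, hB]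
  have h : P.real A ≤ P.real (A ∩ B) + P.real Bᶜ :=
    (measureReal_mono hA).trans (measureReal_union_le _ _)
  exact sub_le_iff_le_add.2 h

lemma pr_lt_eq_one_sub_pr_le [IsProbabilityMeasure P] {Y : Ω → ℝ} (hY : Measurable Y) (x : ℝ) :
    pr P {ω | x < Y ω} = 1 - pr P {ω | Y ω ≤ x} := by
  have h : {ω | x < Y ω} = {ω | Y ω ≤ x}ᶜ := by ext; simp
  rw [h]
  exact probReal_compl_eq_one_sub (measurableSet_le hY measurable_const)

end Probability

section AllLe

variable {Ω : Type*} (X : ℕ → Ω → ℝ)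

lemma allLe_union (S T : Set ℕ) (x : ℝ) :
    allLe X (S ∪ T) x = allLe X S x ∩ allLe X T x := by
  ext ω; simp [allLe, or_imp, forall_and]

lemma allLe_anti {S T : Set ℕ} (h : S ⊆ T) (x : ℝ) : allLe X T x ⊆ allLe X S x :=
  fun _ hω i hi => hω i (h hi)

lemma compl_allLe_subset (s : Finset ℕ) (x : ℝ) :
    (allLe X s x)ᶜ ⊆ ⋃ i ∈ s, {ω | x < X i ω} := by
  intro ω hω
  simp only [allLe, Set.mem_compl_iff, Set.mem_ofPred_eq, not_forall, not_le] at hω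
  obtain ⟨i, hi, hxi⟩ := hω
  exact Set.mem_biUnion hi hxi

lemma compl_allLe_subset_iUnion_last (a b : ℕ) (x : ℝ) :
    (allLe X (Set.Icc a b) x)ᶜ ⊆
      ⋃ j ∈ Icc a b, {ω | x < X j ω} ∩ allLe X (Set.Icc (j + 1) b) x := by
  intro ω hω
  have hne : ((Icc a b).filter fun i => x < X i ω).Nonempty := by
    simp only [allLe, Set.mem_compl_iff, Set.mem_ofPred_eq, not_forall, not_le] at hω
    obtain ⟨i, hi, hxi⟩ := hω
    exact ⟨i, mem_filter.2 ⟨mem_Icc.2 hi, hxi⟩⟩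
  obtain ⟨j, hj, hjmax⟩ := exists_max_image _ id hne
  rw [mem_filter] at hj
  refine Set.mem_biUnion hj.1 ⟨hj.2, fun i ⟨hji, hib⟩ => le_of_not_gt fun hxi => ?_⟩
  have haj := (mem_Icc.1 hj.1).1
  have hij : i ≤ j := hjmax i (mem_filter.2 ⟨mem_Icc.2 ⟨by omega, hib⟩, hxi⟩)
  omega

end AllLe

section Exceedance

variable {Ω : Type*} [MeasurableSpace Ω] (P : Measure Ω) [IsProbabilityMeasure P]
  (X : ℕ → Ω → ℝ)

lemma pr_compl_allLe_le {x u : ℝ} (hexc : ∀ i, 1 ≤ i → pr P {ω | x < X i ω} ≤ u)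
    (s : Finset ℕ) (hs : ∀ i ∈ s, 1 ≤ i) : pr P (allLe X s x)ᶜ ≤ #s * u :=
  calc pr P (allLe X s x)ᶜ ≤ ∑ i ∈ s, pr P {ω | x < X i ω} :=
        (pr_mono P (compl_allLe_subset X s x)).trans (pr_biUnion_le P _ _)
    _ ≤ ∑ _i ∈ s, u := sum_le_sum fun i hi => hexc i (hs i hi)
    _ = #s * u := by rw [sum_const, nsmul_eq_mul]

lemma pr_compl_allLe_Icc_le {x u : ℝ} (hexc : ∀ i, 1 ≤ i → pr P {ω | x < X i ω} ≤ u)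
    {a : ℕ} (ha : 1 ≤ a) (b : ℕ) : pr P (allLe X (Set.Icc a b) x)ᶜ ≤ (b + 1 - a : ℕ) * u := by
  simpa [← coe_Icc] using
    pr_compl_allLe_le P X hexc (Icc a b) fun i hi => ha.trans (mem_Icc.1 hi).1

lemma one_sub_sum_le_pr_allLe (a b : ℕ) (x : ℝ) :
    1 - ∑ j ∈ Icc a b, pr P ({ω | x < X j ω} ∩ allLe X (Set.Icc (j + 1) b) x)
      ≤ pr P (allLe X (Set.Icc a b) x) := by
  have h := (pr_mono P (compl_allLe_subset_iUnion_last X a b x)).trans (pr_biUnion_le P _ _)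
  linarith [one_sub_pr_compl_le P (allLe X (Set.Icc a b) x)]

end Exceedance

/-- `P(X_j > x, M_{j,j+p} ≤ x)`. -/
noncomputable def runEndProb {Ω : Type*} [MeasurableSpace Ω] (P : Measure Ω) (X : ℕ → Ω → ℝ)
    (x : ℝ) (p j : ℕ) : ℝ :=
  pr P ({ω | x < X j ω} ∩ allLe X (Set.Icc (j + 1) (j + p)) x)

section Block

variable {Ω : Type*} [MeasurableSpace Ω] (P : Measure Ω) [IsProbabilityMeasure P]
  (X : ℕ → Ω → ℝ)

lemma sum_runEndProb_le {x u : ℝ} (hexc : ∀ i, 1 ≤ i → pr P {ω | x < X i ω} ≤ u) (p : ℕ)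
    (s : Finset ℕ) (hs : ∀ j ∈ s, 1 ≤ j) : ∑ j ∈ s, runEndProb P X x p j ≤ #s * u :=
  calc _ ≤ ∑ _j ∈ s, u :=
        sum_le_sum fun j hj => (pr_mono P Set.inter_subset_left).trans (hexc j (hs j hj))
    _ = #s * u := by rw [sum_const, nsmul_eq_mul]

/-- The last `p` indices of `[a, b]` are the only ones whose `p`-window leaves the block. -/
lemma one_sub_sum_runEndProb_le {x u : ℝ} (hexc : ∀ i, 1 ≤ i → pr P {ω | x < X i ω} ≤ u)
    (p : ℕ) {a : ℕ} (ha : 1 ≤ a) (b : ℕ) :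
    1 - (∑ j ∈ Icc a b, runEndProb P X x p j + p * u) ≤ pr P (allLe X (Set.Icc a b) x) := by
  have hu : 0 ≤ u := (pr_nonneg P _).trans (hexc 1 le_rfl)
  have hterm : ∀ j ∈ Icc a b, pr P ({ω | x < X j ω} ∩ allLe X (Set.Icc (j + 1) b) x)
      ≤ runEndProb P X x p j + if b < j + p then u else 0 := by
    intro j hj
    split_ifs with hjb
    · exact ((pr_mono P Set.inter_subset_left).trans (hexc j (ha.trans (mem_Icc.1 hj).1))).trans
        (le_add_of_nonneg_left (pr_nonneg P _))
    · rw [add_zero]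
      exact pr_mono P (Set.inter_subset_inter_right _
        (allLe_anti X (Set.Icc_subset_Icc le_rfl (by omega)) x))
  have hcard : #{j ∈ Icc a b | b < j + p} ≤ p :=
    calc #{j ∈ Icc a b | b < j + p} ≤ #(Icc (b + 1 - p) b) := card_le_card fun j hj => by
          simp only [mem_filter, mem_Icc] at hj ⊢
          omega
      _ ≤ p := by rw [Nat.card_Icc]; omega
  have hsum : ∑ j ∈ Icc a b, pr P ({ω | x < X j ω} ∩ allLe X (Set.Icc (j + 1) b) x)
      ≤ ∑ j ∈ Icc a b, runEndProb P X x p j + p * u :=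
    calc _ ≤ ∑ j ∈ Icc a b, (runEndProb P X x p j + if b < j + p then u else 0) :=
          sum_le_sum hterm
      _ = ∑ j ∈ Icc a b, runEndProb P X x p j + #{j ∈ Icc a b | b < j + p} * u := by
          rw [sum_add_distrib, ← sum_filter, sum_const, nsmul_eq_mul]
      _ ≤ _ := by gcongr
  linarith [one_sub_sum_le_pr_allLe P X a b x]

end Block

lemma exp_neg_le_one_sub_add_sq {s : ℝ} (hs : 0 ≤ s) : Real.exp (-s) ≤ 1 - s + s ^ 2 := by
  have h1 : 1 + s ≤ Real.exp s := by linarith [Real.add_one_le_exp s]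
  have h2 : Real.exp (-s) * Real.exp s = 1 := by rw [← Real.exp_add, neg_add_cancel, Real.exp_zero]
  nlinarith [Real.exp_pos (-s), pow_nonneg hs 3]

lemma exp_neg_sub_le_exp_neg_add {a b : ℝ} (ha : 0 ≤ a) (hb : 0 ≤ b) :
    Real.exp (-a) - b ≤ Real.exp (-(a + b)) := by
  have h1 : 1 - b ≤ Real.exp (-b) := by linarith [Real.add_one_le_exp (-b)]
  have h2 : Real.exp (-a) ≤ 1 := Real.exp_le_one_iff.2 (by linarith)
  rw [neg_add, Real.exp_add]
  nlinarith [Real.exp_pos (-a)]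

lemma exp_neg_mul_sub_sq_le_mul {s π g : ℝ} (hs : 0 ≤ s) (hπ : 1 - s ≤ π) (hg₀ : 0 ≤ g)
    (hg₁ : g ≤ 1) : Real.exp (-s) * g - s ^ 2 ≤ π * g := by
  have h := exp_neg_le_one_sub_add_sq hs
  nlinarith [sq_nonneg s]

lemma prod_mul_sub_sum_le_of_step {c d g : ℕ → ℝ} {K : ℕ} (hc : ∀ i < K, 0 ≤ c i ∧ c i ≤ 1)
    (hd : ∀ i < K, 0 ≤ d i) (hstep : ∀ m < K, c m * g (m + 1) - d m ≤ g m) :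
    (∏ i ∈ range K, c i) * g K - ∑ i ∈ range K, d i ≤ g 0 := by
  induction K with
  | zero => simp
  | succ K ih =>
    have hK := ih (fun i hi => hc i (by omega)) (fun i hi => hd i (by omega))
      (fun m hm => hstep m (by omega))
    have hc' : ∀ i ∈ range K, 0 ≤ c i ∧ c i ≤ 1 := fun i hi =>
      hc i (Nat.lt_succ_of_lt (mem_range.1 hi))
    have hc₀ : 0 ≤ ∏ i ∈ range K, c i := prod_nonneg fun i hi => (hc' i hi).1
    have hc₁ : ∏ i ∈ range K, c i ≤ 1 :=
      prod_le_one (fun i hi => (hc' i hi).1) (fun i hi => (hc' i hi).2)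
    have hlast := mul_le_mul_of_nonneg_left (hstep K (by omega)) hc₀
    rw [prod_range_succ, sum_range_succ]
    nlinarith [hd K (by omega)]

lemma sum_range_sum_Ioc_mul {M : Type*} [AddCommMonoid M] (f : ℕ → M) (r K : ℕ) :
    ∑ i ∈ range K, ∑ j ∈ Ioc (i * r) ((i + 1) * r), f j = ∑ j ∈ Ioc 0 (K * r), f j := by
  induction K with
  | zero => simp
  | succ K ih =>
    rw [sum_range_succ, ih,
      sum_Ioc_consecutive _ (Nat.zero_le _) (Nat.mul_le_mul_right r K.le_succ)]

lemma exists_succ_mul_le_lt_add_two_mul {n r : ℕ} (hr : 0 < r) (hrn : r ≤ n) :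
    ∃ K, (K + 1) * r ≤ n ∧ n < (K + 2) * r := by
  have hnr : 1 ≤ n / r := (Nat.le_div_iff_mul_le hr).2 (by linarith)
  refine ⟨n / r - 1, ?_, ?_⟩
  · rw [show n / r - 1 + 1 = n / r by omega]
    exact Nat.div_mul_le_self n r
  · rw [show n / r - 1 + 2 = n / r + 1 by omega, add_one_mul]
    exact Nat.lt_div_mul_add hr

lemma sum_range_sum_Icc_le_sum_Icc {t : ℕ → ℝ} (ht : ∀ j, 0 ≤ t j) {r q K n : ℕ}
    (hK : K * r ≤ n) :
    ∑ i ∈ range K, ∑ j ∈ Icc (i * r + 1) ((i + 1) * r - q), t j ≤ ∑ j ∈ Icc 1 n, t j :=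
  calc _ ≤ ∑ i ∈ range K, ∑ j ∈ Ioc (i * r) ((i + 1) * r), t j :=
        sum_le_sum fun i _ => sum_le_sum_of_subset_of_nonneg
          (fun j hj => by rw [mem_Icc] at hj; rw [mem_Ioc]; omega) fun j _ _ => ht j
    _ = ∑ j ∈ Ioc 0 (K * r), t j := sum_range_sum_Ioc_mul t r K
    _ ≤ ∑ j ∈ Icc 1 n, t j := sum_le_sum_of_subset_of_nonneg
        (fun j hj => by rw [mem_Ioc] at hj; rw [mem_Icc]; omega) fun j _ _ => ht j

noncomputable def blockError (n r α c u : ℝ) : ℝ :=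
  n / r * (α + c * u) + 2 * r * u * (2 * n * u + 1)

section AIM

variable {Ω : Type*} [MeasurableSpace Ω] {P : Measure Ω} {X : ℕ → Ω → ℝ} {xs : ℕ → ℝ}
  {q : ℕ → ℕ} {α : ℕ → ℝ}

lemma AIMBound.nonneg (hbd : AIMBound P X xs q α) {n a b c : ℕ} (ha : 1 ≤ a) (hab : a ≤ b)
    (hbc : b + q n + 1 ≤ c) (hcn : c ≤ n) (h₁ : q n ≤ b + 1 - a) (h₂ : q n ≤ c - (b + q n)) :
    0 ≤ α n :=
  (abs_nonneg _).trans (hbd n a b c ha hab hbc hcn h₁ h₂)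

/-- Bridging the gap `[b + 1, b + q n]` costs at most `q n * u`. -/
lemma AIMBound.mul_sub_le_pr_allLe [IsProbabilityMeasure P] (hbd : AIMBound P X xs q α)
    {n : ℕ} {u : ℝ} (hexc : ∀ i, 1 ≤ i → pr P {ω | xs n < X i ω} ≤ u) {a b c : ℕ}
    (ha : 1 ≤ a) (hab : a ≤ b) (hbc : b + q n + 1 ≤ c) (hcn : c ≤ n) (h₁ : q n ≤ b + 1 - a)
    (h₂ : q n ≤ c - (b + q n)) :
    pr P (allLe X (Set.Icc a b) (xs n)) * pr P (allLe X (Set.Icc (b + q n + 1) c) (xs n))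
      - (α n + q n * u) ≤ pr P (allLe X (Set.Icc a c) (xs n)) := by
  have hsplit : Set.Icc a c =
      (Set.Icc a b ∪ Set.Icc (b + q n + 1) c) ∪ Set.Icc (b + 1) (b + q n) := by
    ext j; simp only [Set.mem_Icc, Set.mem_union]; omega
  have hgap := pr_compl_allLe_Icc_le P X hexc (Nat.le_add_left 1 b) (b + q n)
  rw [show b + q n + 1 - (b + 1) = q n by omega] at hgap
  have hcut := pr_sub_pr_compl_le_pr_inter P
    (allLe X (Set.Icc a b ∪ Set.Icc (b + q n + 1) c) (xs n))
    (allLe X (Set.Icc (b + 1) (b + q n)) (xs n))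
  rw [← allLe_union, ← hsplit] at hcut
  have hmix := (abs_le.1 (hbd n a b c ha hab hbc hcn h₁ h₂)).1
  linarith

lemma AIMBound.exp_neg_sum_mul_sub_le [IsProbabilityMeasure P] (hbd : AIMBound P X xs q α)
    {n : ℕ} {u : ℝ} (hexc : ∀ i, 1 ≤ i → pr P {ω | xs n < X i ω} ≤ u) {r K : ℕ} (hr : 0 < r)
    (hqr : 2 * q n ≤ r) (hK : (K + 1) * r ≤ n) {s : ℕ → ℝ} (hs₀ : ∀ i, 0 ≤ s i)
    (hs : ∀ i < K, 1 - s i ≤ pr P (allLe X (Set.Icc (i * r + 1) ((i + 1) * r - q n)) (xs n))) :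
    Real.exp (-∑ i ∈ range K, s i) * pr P (allLe X (Set.Icc (K * r + 1) n) (xs n))
      - ∑ i ∈ range K, (α n + q n * u + s i ^ 2) ≤ pr P (allLe X (Set.Icc 1 n) (xs n)) := by
  have hu : 0 ≤ u := (pr_nonneg P _).trans (hexc 1 le_rfl)
  set g : ℕ → ℝ := fun m => pr P (allLe X (Set.Icc (m * r + 1) n) (xs n))
  have hmr : ∀ m, (m + 1) * r = m * r + r := fun m => by ring
  have hroom : ∀ m < K, m * r + 2 * r ≤ n := fun m hm => by
    have := Nat.mul_le_mul_right r (show m + 2 ≤ K + 1 by omega)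
    linarith [hmr m, hmr (m + 1)]
  have hα : ∀ m < K, 0 ≤ α n := fun m hm => by
    have := hroom m hm; have := hmr m
    exact hbd.nonneg (a := m * r + 1) (b := (m + 1) * r - q n) (c := n)
      (by omega) (by omega) (by omega) le_rfl (by omega) (by omega)
  have hstep : ∀ m < K, Real.exp (-s m) * g (m + 1) - (α n + q n * u + s m ^ 2) ≤ g m := by
    intro m hm
    have := hroom m hm; have := hmr m
    have hpeel := hbd.mul_sub_le_pr_allLe hexc (a := m * r + 1) (b := (m + 1) * r - q n)
      (c := n) (by omega) (by omega) (by omega) le_rfl (by omega) (by omega)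
    rw [show (m + 1) * r - q n + q n + 1 = (m + 1) * r + 1 by omega] at hpeel
    have hπ := exp_neg_mul_sub_sq_le_mul (hs₀ m) (hs m hm) (pr_nonneg P _)
      (pr_le_one P (allLe X (Set.Icc ((m + 1) * r + 1) n) (xs n)))
    linarith
  have hiter := prod_mul_sub_sum_le_of_step
    (fun i _ => ⟨(Real.exp_pos _).le, Real.exp_le_one_iff.2 (neg_nonpos.2 (hs₀ i))⟩)
    (fun i hi => by have := hα i hi; positivity) hstep
  rw [← Real.exp_sum, sum_neg_distrib] at hiter
  simpa [g] using hiter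

lemma AIMBound.exp_neg_sum_sub_le_pr_allLe [IsProbabilityMeasure P] (hbd : AIMBound P X xs q α)
    {n : ℕ} {u : ℝ} (hexc : ∀ i, 1 ≤ i → pr P {ω | xs n < X i ω} ≤ u) {r K : ℕ} (hr : 0 < r)
    (hqr : 2 * q n ≤ r) (hK : (K + 1) * r ≤ n) (hnK : n < (K + 2) * r) {s : ℕ → ℝ}
    (hs₀ : ∀ i, 0 ≤ s i)
    (hs : ∀ i < K, 1 - s i ≤ pr P (allLe X (Set.Icc (i * r + 1) ((i + 1) * r - q n)) (xs n))) :
    Real.exp (-∑ i ∈ range K, s i) - (K * (α n + q n * u) + ∑ i ∈ range K, s i ^ 2 + 2 * r * u)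
      ≤ pr P (allLe X (Set.Icc 1 n) (xs n)) := by
  have hu : 0 ≤ u := (pr_nonneg P _).trans (hexc 1 le_rfl)
  have htail : 1 - 2 * r * u ≤ pr P (allLe X (Set.Icc (K * r + 1) n) (xs n)) := by
    have h := pr_compl_allLe_Icc_le P X hexc (Nat.le_add_left 1 (K * r)) n
    have hlen : n + 1 - (K * r + 1) ≤ 2 * r := by
      rw [show (K + 2) * r = K * r + 2 * r by ring] at hnK; omega
    have hcast : ((n + 1 - (K * r + 1) : ℕ) : ℝ) * u ≤ 2 * r * u := by
      gcongr; exact_mod_cast hlen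
    linarith [one_sub_pr_compl_le P (allLe X (Set.Icc (K * r + 1) n) (xs n))]
  have hblocks := hbd.exp_neg_sum_mul_sub_le hexc hr hqr hK hs₀ hs
  rw [sum_add_distrib, sum_const, card_range, nsmul_eq_mul] at hblocks
  have hE := mul_le_mul_of_nonneg_left htail (Real.exp_pos (-∑ i ∈ range K, s i)).le
  have hE₁ : Real.exp (-∑ i ∈ range K, s i) * (2 * r * u) ≤ 2 * r * u :=
    mul_le_of_le_one_left (by positivity)
      (Real.exp_le_one_iff.2 (neg_nonpos.2 (sum_nonneg fun i _ => hs₀ i)))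
  linarith

lemma AIMBound.exp_neg_sum_runEndProb_sub_le [IsProbabilityMeasure P] (hbd : AIMBound P X xs q α)
    {n : ℕ} {u : ℝ} (hexc : ∀ i, 1 ≤ i → pr P {ω | xs n < X i ω} ≤ u) {r p : ℕ}
    (hr : 0 < r) (hqr : 2 * q n ≤ r) (hpr : p ≤ r) (hrn : 2 * r ≤ n) :
    Real.exp (-∑ j ∈ Icc 1 n, runEndProb P X (xs n) p j)
      - blockError n r (α n) (q n + p) u ≤ pr P (allLe X (Set.Icc 1 n) (xs n)) := by
  have hu : 0 ≤ u := (pr_nonneg P _).trans (hexc 1 le_rfl)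
  have hα : 0 ≤ α n := hbd.nonneg (a := 1) (b := r - q n) (c := n)
    le_rfl (by omega) (by omega) le_rfl (by omega) (by omega)
  obtain ⟨K, hKr, hnK⟩ := exists_succ_mul_le_lt_add_two_mul (n := n) hr (by omega)
  have hK : (K : ℝ) * r ≤ n := by exact_mod_cast (Nat.mul_le_mul_right r K.le_succ).trans hKr
  set S := ∑ j ∈ Icc 1 n, runEndProb P X (xs n) p j
  set s : ℕ → ℝ := fun i =>
    ∑ j ∈ Icc (i * r + 1) ((i + 1) * r - q n), runEndProb P X (xs n) p j + p * u
  have ht₀ : ∀ j, 0 ≤ runEndProb P X (xs n) p j := fun j => pr_nonneg P _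
  have hs₀ : ∀ i, 0 ≤ s i := fun i => add_nonneg (sum_nonneg fun j _ => ht₀ j) (by positivity)
  have hs_le : ∀ i, s i ≤ 2 * r * u := by
    intro i
    have hcard : (#(Icc (i * r + 1) ((i + 1) * r - q n)) : ℝ) ≤ r := by
      rw [Nat.card_Icc]
      exact_mod_cast (by rw [show (i + 1) * r = i * r + r by ring]; omega)
    have hblock := sum_runEndProb_le P X hexc p (Icc (i * r + 1) ((i + 1) * r - q n))
      fun j hj => by rw [mem_Icc] at hj; omega
    have : (#(Icc (i * r + 1) ((i + 1) * r - q n)) : ℝ) * u + p * u ≤ r * u + r * u := by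
      gcongr
    linarith
  have hmain := hbd.exp_neg_sum_sub_le_pr_allLe hexc hr hqr hKr hnK hs₀
    (fun i _ => one_sub_sum_runEndProb_le P X hexc p (Nat.le_add_left 1 _) _)
  have hsum : ∑ i ∈ range K, s i ≤ S + K * p * u := by
    have := sum_range_sum_Icc_le_sum_Icc ht₀ (q := q n) (hK := by exact_mod_cast hK)
    simp only [s, sum_add_distrib, sum_const, card_range, nsmul_eq_mul]
    linarith
  have hsq : ∑ i ∈ range K, s i ^ 2 ≤ 4 * n * r * u ^ 2 :=
    calc _ ≤ ∑ _i ∈ range K, (2 * r * u) ^ 2 :=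
          sum_le_sum fun i _ => pow_le_pow_left₀ (hs₀ i) (hs_le i) 2
      _ = 4 * (K * r) * r * u ^ 2 := by rw [sum_const, card_range, nsmul_eq_mul]; ring
      _ ≤ 4 * n * r * u ^ 2 := by gcongr
  have hexp : Real.exp (-S) - K * p * u ≤ Real.exp (-∑ i ∈ range K, s i) :=
    (exp_neg_sub_le_exp_neg_add (sum_nonneg fun j _ => ht₀ j) (by positivity)).trans
      (Real.exp_le_exp.2 (by linarith))
  have hKn : (K : ℝ) * (α n + (q n + p) * u) ≤ n / r * (α n + (q n + p) * u) := by
    gcongr; rw [le_div_iff₀ (by exact_mod_cast hr)]; exact hK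
  rw [blockError]
  linarith

end AIM

lemma eventually_mul_le_of_isLittleO {ι : Type*} {l : Filter ι} {f g : ι → ℕ}
    (h : (fun i => (f i : ℝ)) =o[l] (fun i => (g i : ℝ))) (k : ℕ) :
    ∀ᶠ i in l, k * f i ≤ g i := by
  filter_upwards [h.bound (show (0 : ℝ) < 1 / (k + 1) by positivity)] with i hi
  rw [Real.norm_natCast, Real.norm_natCast, one_div, inv_mul_eq_div,
    le_div_iff₀ (by positivity)] at hi
  have : (k : ℝ) * f i ≤ g i := by nlinarith [(f i).cast_nonneg (α := ℝ)]
  exact_mod_cast this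

lemma exists_isLittleO_isLittleO_natCast {p : ℕ → ℕ}
    (hp : (fun n => (p n : ℝ)) =o[atTop] (fun n => (n : ℝ))) :
    ∃ r : ℕ → ℕ, (∀ n, 0 < r n) ∧ (fun n => (p n : ℝ)) =o[atTop] (fun n => (r n : ℝ)) ∧
      (fun n => (r n : ℝ)) =o[atTop] (fun n => (n : ℝ)) := by
  -- up to rounding, the geometric mean of `p n` and `n`
  refine ⟨fun n => Nat.sqrt (p n * n) + 1, fun n => Nat.succ_pos _, ?_, ?_⟩
  · refine IsLittleO.of_pow (n := 2) (IsLittleO.of_bound fun c hc => ?_) two_ne_zero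
    filter_upwards [hp.bound hc] with n hn
    simp only [Pi.pow_apply, norm_pow, Real.norm_natCast] at hn ⊢
    have h : ((p n * n : ℕ) : ℝ) ≤ ((Nat.sqrt (p n * n) + 1 : ℕ) : ℝ) ^ 2 := by
      exact_mod_cast (Nat.lt_succ_sqrt' _).le
    push_cast at h ⊢
    nlinarith [mul_le_mul_of_nonneg_right hn (p n).cast_nonneg]
  · have hs : (fun n => (Nat.sqrt (p n * n) : ℝ)) =o[atTop] (fun n => (n : ℝ)) := by
      refine IsLittleO.of_pow (n := 2) (IsLittleO.of_bound fun c hc => ?_) two_ne_zero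
      filter_upwards [hp.bound hc] with n hn
      simp only [Pi.pow_apply, norm_pow, Real.norm_natCast] at hn ⊢
      have h : ((Nat.sqrt (p n * n) : ℕ) : ℝ) ^ 2 ≤ ((p n * n : ℕ) : ℝ) := by
        exact_mod_cast Nat.sqrt_le' _
      push_cast at h
      nlinarith [mul_le_mul_of_nonneg_right hn n.cast_nonneg]
    have h1 : (fun _ : ℕ => (1 : ℝ)) =o[atTop] (fun n => (n : ℝ)) :=
      (isLittleO_one_left_iff ℝ).2 (by simpa using tendsto_natCast_atTop_atTop)
    simpa using hs.add h1

lemma tendsto_blockError_zero {r α c u : ℕ → ℝ} {τ : ℝ}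
    (hr : r =o[atTop] (fun n : ℕ => (n : ℝ))) (hα : (fun n => n * α n) =o[atTop] r)
    (hc : c =o[atTop] r) (hu : Tendsto (fun n : ℕ => n * u n) atTop (nhds τ)) :
    Tendsto (fun n : ℕ => blockError n (r n) (α n) (c n) (u n)) atTop (nhds 0) := by
  have h := (hα.tendsto_div_nhds_zero.add (hc.tendsto_div_nhds_zero.mul hu)).add
    (((hr.tendsto_div_nhds_zero.mul hu).mul ((hu.const_mul 2).add_const 1)).const_mul 2)
  simp only [zero_mul, mul_zero, add_zero] at h
  refine h.congr' ?_
  filter_upwards [eventually_ne_atTop 0] with n hn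
  rw [blockError]
  field_simp

lemma zero_le_liminf_of_neg_le {ι : Type*} {l : Filter ι} {f e : ι → ℝ}
    (he : Tendsto e l (nhds 0)) (hfe : ∀ᶠ i in l, -e i ≤ f i)
    (hf : IsCoboundedUnder (· ≥ ·) l f) : 0 ≤ liminf f l := by
  refine le_of_forall_pos_le_add fun ε hε => ?_
  have : -ε ≤ liminf f l := le_liminf_of_le hf (by
    filter_upwards [hfe, he.eventually (gt_mem_nhds hε)] with i h1 h2
    linarith)
  linarith

theorem stmt17_general {Ω : Type*} [MeasurableSpace Ω] (P : Measure Ω) [IsProbabilityMeasure P]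
    (X : ℕ → Ω → ℝ) (F : ℝ → ℝ) (xs : ℕ → ℝ) (q : ℕ → ℕ) (α : ℕ → ℝ) (p : ℕ → ℕ)
    (τ : ℝ)
    (hmeas : ∀ i, Measurable (X i))
    (hF : ∀ i, 1 ≤ i → ∀ t : ℝ, pr P {ω | X i ω ≤ t} = F t)
    (hbd : AIMBound P X xs q α)
    (hFbar : Tendsto (fun n : ℕ => (n : ℝ) * (1 - F (xs n))) atTop (nhds τ))
    (hp : (fun n : ℕ => (p n : ℝ)) =o[atTop] (fun n : ℕ => (n : ℝ)))
    (hnα : (fun n : ℕ => (n : ℝ) * α n) =o[atTop] (fun n : ℕ => (p n : ℝ)))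
    (hqp : (fun n : ℕ => (q n : ℝ)) =o[atTop] (fun n : ℕ => (p n : ℝ))) :
    0 ≤ Filter.liminf (fun n : ℕ =>
      pr P (allLe X (Set.Icc 1 n) (xs n)) -
        Real.exp (-(∑ j ∈ Finset.Icc 1 n,
          pr P ({ω | xs n < X j ω} ∩ allLe X (Set.Icc (j + 1) (j + p n)) (xs n)))))
      atTop := by
  obtain ⟨r, hr, hpr, hrn⟩ := exists_isLittleO_isLittleO_natCast hp
  have hqr := hqp.trans hpr
  have hexc : ∀ n i, 1 ≤ i → pr P {ω | xs n < X i ω} ≤ 1 - F (xs n) := fun n i hi => by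
    rw [pr_lt_eq_one_sub_pr_le P (hmeas i), hF i hi]
  have hE := tendsto_blockError_zero hrn (hnα.trans hpr) (hqr.add hpr) hFbar
  refine zero_le_liminf_of_neg_le hE ?_
    (isCoboundedUnder_ge_of_le atTop fun n => (sub_le_self _ (Real.exp_pos _).le).trans
      (pr_le_one P _))
  filter_upwards [eventually_mul_le_of_isLittleO hqr 2, eventually_mul_le_of_isLittleO hpr 1,
    eventually_mul_le_of_isLittleO (g := id) hrn 2] with n hqrn hprn hrnn
  have h := hbd.exp_neg_sum_runEndProb_sub_le (hexc n) (hr n) hqrn (by simpa using hprn) hrnn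
  simp only [runEndProb] at h
  linarith

/-- under AIM(xₙ), `n·F̄(xₙ) → τ > 0`, and `pₙ = o(n)`,
`n·αₙ = o(pₙ)`, `qₙ = o(pₙ)`:
`liminf_{n→∞} [P(Mₙ ≤ xₙ) − exp{−∑_{j=1}^n P(X_j > xₙ, M_{j,j+pₙ} ≤ xₙ)}] ≥ 0`. -/
theorem stmt17 {Ω : Type*} [MeasurableSpace Ω] (P : Measure Ω) [IsProbabilityMeasure P]
    (X : ℕ → Ω → ℝ) (F : ℝ → ℝ) (xs : ℕ → ℝ) (q : ℕ → ℕ) (α : ℕ → ℝ) (p : ℕ → ℕ)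
    (τ : ℝ) (hτ : 0 < τ)
    (hmeas : ∀ i, Measurable (X i))
    (hF : ∀ i, 1 ≤ i → ∀ t : ℝ, pr P {ω | X i ω ≤ t} = F t)
    (hqpos : ∀ m, 1 ≤ q m)
    (hq : (fun n : ℕ => (q n : ℝ)) =o[atTop] (fun n : ℕ => (n : ℝ)))
    (hα : Tendsto α atTop (nhds 0))
    (hbd : AIMBound P X xs q α)
    (hFbar : Tendsto (fun n : ℕ => (n : ℝ) * (1 - F (xs n))) atTop (nhds τ))
    (hppos : ∀ m, 1 ≤ p m)
    (hp : (fun n : ℕ => (p n : ℝ)) =o[atTop] (fun n : ℕ => (n : ℝ)))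
    (hnα : (fun n : ℕ => (n : ℝ) * α n) =o[atTop] (fun n : ℕ => (p n : ℝ)))
    (hqp : (fun n : ℕ => (q n : ℝ)) =o[atTop] (fun n : ℕ => (p n : ℝ))) :
    0 ≤ Filter.liminf (fun n : ℕ =>
      pr P (allLe X (Set.Icc 1 n) (xs n)) -
        Real.exp (-(∑ j ∈ Finset.Icc 1 n,
          pr P ({ω | xs n < X j ω} ∩ allLe X (Set.Icc (j + 1) (j + p n)) (xs n)))))
      atTop :=
  stmt17_general P X F xs q α p τ hmeas hF hbd hFbar hp hnα hqp
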